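/- Let A be the adjacency matrix of a finite simple undirected graph and v : ℝ → ℝ^N a differentiable vector function with 0 ≤ v_j(t) ≤ 1 satisfying componentwise v_j'(t) ≤ β Σ_k a_{kj} v_k(t) - δ v_j(t). If β λ_1 < δ, where λ_1 is the largest eigenvalue of A, then ‖v(t)‖ → 0 as t → ∞. -/

import Mathlib

/-!
Let `E(t) = ‖v(t)‖²`. Since `v ≥ 0` and `β ≥ 0`, the differential inequality gives
`E' = 2 ⟪v, v'⟫ ≤ 2β ⟪v, A v⟫ - 2δ E`, and the Rayleigh quotient of the symmetric matrix `A` is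
at most `λ₁`, so `E' ≤ 2 (βλ₁ - δ) E`. By Grönwall's inequality `E` decays exponentially.
-/

open Matrix Finset Filter Real
open scoped MatrixOrder

theorem Matrix.IsHermitian.dotProduct_mulVec_le {n : Type*} [Fintype n] [DecidableEq n]
    {A : Matrix n n ℝ} (hA : A.IsHermitian) {lam : ℝ} (hlam : ∀ μ ∈ spectrum ℝ A, μ ≤ lam)
    (x : n → ℝ) : x ⬝ᵥ A *ᵥ x ≤ lam * (x ⬝ᵥ x) := by
  have hle : A ≤ algebraMap ℝ _ lam := le_algebraMap_of_spectrum_le hlam hA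
  simpa [sub_mulVec, dotProduct_sub, Algebra.algebraMap_eq_smul_one, smul_mulVec] using
    (Matrix.le_iff.mp hle).dotProduct_mulVec_nonneg x

theorem Matrix.IsHermitian.dotProduct_le_of_le_vecMul_sub {n : Type*} [Fintype n] [DecidableEq n]
    {A : Matrix n n ℝ} (hA : A.IsHermitian) {lam : ℝ} (hlam : ∀ μ ∈ spectrum ℝ A, μ ≤ lam)
    {β δ : ℝ} (hβ : 0 ≤ β) {x y : n → ℝ} (hx : 0 ≤ x) (hy : y ≤ β • (x ᵥ* A) - δ • x) :
    x ⬝ᵥ y ≤ (β * lam - δ) * (x ⬝ᵥ x) :=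
  calc x ⬝ᵥ y ≤ x ⬝ᵥ (β • (x ᵥ* A) - δ • x) := dotProduct_le_dotProduct_of_nonneg_left hy hx
    _ = β * (x ⬝ᵥ A *ᵥ x) - δ * (x ⬝ᵥ x) := by
      rw [dotProduct_sub, dotProduct_smul, dotProduct_smul, dotProduct_mulVec, dotProduct_comm,
        smul_eq_mul, smul_eq_mul]
    _ ≤ (β * lam - δ) * (x ⬝ᵥ x) := by
      nlinarith [mul_le_mul_of_nonneg_left (hA.dotProduct_mulVec_le hlam x) hβ]

theorem hasDerivAt_dotProduct_self {n : Type*} [Fintype n] {x : ℝ → n → ℝ} {x' : n → ℝ} {t : ℝ}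
    (hx : HasDerivAt x x' t) : HasDerivAt (fun s => x s ⬝ᵥ x s) (2 * (x t ⬝ᵥ x')) t := by
  have hxj := hasDerivAt_pi.mp hx
  have hsum : 2 * (x t ⬝ᵥ x') = ∑ j, (x' j * x t j + x t j * x' j) := by
    simp only [dotProduct, mul_sum]
    exact sum_congr rfl fun j _ => by ring
  rw [hsum]
  exact HasDerivAt.fun_sum fun j _ => (hxj j).fun_mul (hxj j)

theorem le_mul_exp_of_hasDerivAt_le_mul {f f' : ℝ → ℝ} {K a : ℝ}
    (hf : ∀ t ∈ Set.Ici a, HasDerivAt f (f' t) t) (bound : ∀ t ∈ Set.Ici a, f' t ≤ K * f t)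
    {t : ℝ} (ht : a ≤ t) : f t ≤ f a * exp (K * (t - a)) := by
  rw [← gronwallBound_ε0]
  refine le_gronwallBound_of_liminf_deriv_right_le (f' := f') (b := t)
    (fun s hs => (hf s hs.1).continuousAt.continuousWithinAt)
    (fun s hs r hr => (hf s hs.1).hasDerivWithinAt.liminf_right_slope_le hr) le_rfl
    (fun s hs => by simpa using bound s hs.1) t ⟨ht, le_rfl⟩

theorem tendsto_zero_of_le_mul_exp {f : ℝ → ℝ} {C K : ℝ} (hK : K < 0) (hf0 : ∀ t, 0 ≤ f t)
    (hf : ∀ᶠ t in atTop, f t ≤ C * exp (K * t)) : Tendsto f atTop (nhds 0) := by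
  refine squeeze_zero' (Eventually.of_forall hf0) hf ?_
  simpa using (tendsto_exp_atBot.comp (tendsto_id.const_mul_atTop_of_neg hK)).const_mul C

theorem subthreshold_extinction_general (N : ℕ)
    (A : Matrix (Fin N) (Fin N) ℝ)
    (hAsym : A.IsSymm)
    (lam1 : ℝ)
    (hmax : ∀ μ ∈ spectrum ℝ A, μ ≤ lam1)
    (β δ : ℝ) (hβ : 0 < β) (hsub : β * lam1 < δ)
    (v : ℝ → EuclideanSpace ℝ (Fin N))
    (hv : ∀ j, Differentiable ℝ (fun t => v t j))
    (hv01 : ∀ t j, 0 ≤ v t j ∧ v t j ≤ 1)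
    (hderiv : ∀ t, 0 ≤ t → ∀ j,
      deriv (fun s => v s j) t ≤ β * (∑ k, A k j * v t k) - δ * v t j) :
    Tendsto (fun t => ‖v t‖) atTop (nhds 0) := by
  set x : ℝ → Fin N → ℝ := fun t => (v t).ofLp
  set x' : ℝ → Fin N → ℝ := fun t j => deriv (fun s => v s j) t
  have hnorm : ∀ t, ‖v t‖ ^ 2 = x t ⬝ᵥ x t := fun t => by
    rw [← real_inner_self_eq_norm_sq, EuclideanSpace.inner_eq_star_dotProduct, dotProduct_comm]
    rfl
  have hE : ∀ t, HasDerivAt (fun s => x s ⬝ᵥ x s) (2 * (x t ⬝ᵥ x' t)) t := fun t =>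
    hasDerivAt_dotProduct_self (hasDerivAt_pi.mpr fun j => (hv j t).hasDerivAt)
  have hdecay : ∀ t ∈ Set.Ici 0, 2 * (x t ⬝ᵥ x' t) ≤ 2 * (β * lam1 - δ) * (x t ⬝ᵥ x t) := by
    intro t ht
    have hy : x' t ≤ β • (x t ᵥ* A) - δ • x t := fun j => by
      simpa [vecMul, dotProduct, mul_comm] using hderiv t ht j
    have := (isHermitian_iff_isSymm.mpr hAsym).dotProduct_le_of_le_vecMul_sub hmax hβ.le
      (fun j => (hv01 t j).1) hy
    linarith
  have hsq : Tendsto (fun t => ‖v t‖ ^ 2) atTop (nhds 0) := by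
    simp only [hnorm]
    refine tendsto_zero_of_le_mul_exp (C := x 0 ⬝ᵥ x 0) (by linarith : 2 * (β * lam1 - δ) < 0)
      (fun t => dotProduct_self_star_nonneg _) ?_
    filter_upwards [eventually_ge_atTop 0] with t ht
    simpa using le_mul_exp_of_hasDerivAt_le_mul (fun s _ => hE s) hdecay ht
  simpa [Function.comp_def, sqrt_sq (norm_nonneg _)] using (continuous_sqrt.tendsto 0).comp hsq

/-- If `v : ℝ → ℝ^N` is differentiable with `0 ≤ v_j(t) ≤ 1` and satisfies
componentwise `v_j' ≤ β ∑_k a_{kj} v_k - δ v_j` for `t ≥ 0`, where `A` is the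
adjacency matrix of a simple graph with largest eigenvalue `λ₁`, and
`β λ₁ < δ`, then `‖v(t)‖ → 0` as `t → ∞`. -/
theorem subthreshold_extinction (N : ℕ)
    (A : Matrix (Fin N) (Fin N) ℝ)
    (hA01 : ∀ i j, A i j = 0 ∨ A i j = 1) (hAsym : A.IsSymm)
    (hAdiag : ∀ i, A i i = 0)
    (lam1 : ℝ) (hmem : lam1 ∈ spectrum ℝ A)
    (hmax : ∀ μ ∈ spectrum ℝ A, μ ≤ lam1)
    (β δ : ℝ) (hβ : 0 < β) (hδ : 0 < δ) (hsub : β * lam1 < δ)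
    (v : ℝ → EuclideanSpace ℝ (Fin N))
    (hv : ∀ j, Differentiable ℝ (fun t => v t j))
    (hv01 : ∀ t j, 0 ≤ v t j ∧ v t j ≤ 1)
    (hderiv : ∀ t, 0 ≤ t → ∀ j,
      deriv (fun s => v s j) t ≤ β * (∑ k, A k j * v t k) - δ * v t j) :
    Tendsto (fun t => ‖v t‖) atTop (nhds 0) :=
  subthreshold_extinction_general N A hAsym lam1 hmax β δ hβ hsub v hv hv01 hderiv
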